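/- Let 0 < α < 1, τ > 0, σ > 0, j ≥ 0, and set t_j = jτ, t_{j+1/2} = (j + 1/2)τ, t_{j+σ} = (j+σ)τ. Then ∫_{t_j}^{t_{j+σ}} (η − t_{j+1/2}) (t_{j+σ} − η)^{−α} dη = τ^{2−α} σ^{1−α} (2σ + α − 2) / (2 (1−α) (2−α)). In particular, if σ = 1 − α/2, this integral equals zero. -/

import Mathlib

/-! Substituting `x = t_{j+σ} - η` turns the integral into `∫₀^{στ} ((σ - 1/2)τ - x) x^{-α} dx`,
which is a combination of two power integrals. -/

open intervalIntegral

theorem integral_const_sub_mul_rpow_neg {α L : ℝ} (c : ℝ) (hα : α < 1) (hL : 0 ≤ L) :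
    ∫ x in (0 : ℝ)..L, (c - x) * x ^ (-α) =
      c * (L ^ (1 - α) / (1 - α)) - L ^ (2 - α) / (2 - α) := by
  have hsplit : ∀ x ∈ Set.uIcc 0 L, (c - x) * x ^ (-α) = c * x ^ (-α) - x ^ (1 - α) := by
    intro x hx
    have hx0 : 0 ≤ x := by rw [Set.uIcc_of_le hL] at hx; exact hx.1
    rw [show 1 - α = 1 + -α by ring, Real.rpow_add' hx0 (by linarith), Real.rpow_one]
    ring
  have hint₀ : IntervalIntegrable (fun x : ℝ => x ^ (-α)) MeasureTheory.volume 0 L :=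
    intervalIntegrable_rpow' (by linarith)
  have hint₁ : IntervalIntegrable (fun x : ℝ => x ^ (1 - α)) MeasureTheory.volume 0 L :=
    intervalIntegrable_rpow' (by linarith)
  rw [integral_congr hsplit, integral_sub (hint₀.const_mul c) hint₁, integral_const_mul,
    integral_rpow (Or.inl (by linarith)), integral_rpow (Or.inl (by linarith)),
    Real.zero_rpow (by linarith), Real.zero_rpow (by linarith)]
  ring_nf

theorem integral_sub_mul_rpow_neg_sub {α a b : ℝ} (m : ℝ) (hα : α < 1) (hab : a ≤ b) :
    ∫ η in a..b, (η - m) * (b - η) ^ (-α) =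
      (b - m) * ((b - a) ^ (1 - α) / (1 - α)) - (b - a) ^ (2 - α) / (2 - α) := by
  rw [← integral_const_sub_mul_rpow_neg (b - m) hα (sub_nonneg.2 hab), ← sub_self b,
    ← integral_comp_sub_left _ b]
  congr 1 with η
  ring_nf

theorem integral_last_interval (α σ τ : ℝ) (hα1 : α < 1)
    (hσ : 0 < σ) (hτ : 0 < τ) (j : ℕ) :
    (∫ η in ((j : ℝ) * τ)..(((j : ℝ) + σ) * τ),
        (η - ((j : ℝ) + 1 / 2) * τ) * (((j : ℝ) + σ) * τ - η) ^ (-α)) =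
      τ ^ (2 - α) * σ ^ (1 - α) * (2 * σ + α - 2) / (2 * (1 - α) * (2 - α)) ∧
    (σ = 1 - α / 2 →
      (∫ η in ((j : ℝ) * τ)..(((j : ℝ) + σ) * τ),
          (η - ((j : ℝ) + 1 / 2) * τ) * (((j : ℝ) + σ) * τ - η) ^ (-α)) = 0) := by
  have hlen : ((j : ℝ) + σ) * τ - j * τ = σ * τ := by ring
  have hmid : ((j : ℝ) + σ) * τ - (j + 1 / 2) * τ = (σ - 1 / 2) * τ := by ring
  have hpow : ∀ b : ℝ, 0 < b → b ^ (2 - α) = b ^ (1 - α) * b := fun b hb => by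
    rw [← Real.rpow_add_one hb.ne']; ring_nf
  have key : (∫ η in ((j : ℝ) * τ)..(((j : ℝ) + σ) * τ),
        (η - ((j : ℝ) + 1 / 2) * τ) * (((j : ℝ) + σ) * τ - η) ^ (-α)) =
      τ ^ (2 - α) * σ ^ (1 - α) * (2 * σ + α - 2) / (2 * (1 - α) * (2 - α)) := by
    rw [integral_sub_mul_rpow_neg_sub _ hα1 (by nlinarith), hlen, hmid,
      Real.mul_rpow hσ.le hτ.le, Real.mul_rpow hσ.le hτ.le, hpow σ hσ, hpow τ hτ]
    field_simp [show 1 - α ≠ 0 by linarith, show 2 - α ≠ 0 by linarith]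
    ring
  refine ⟨key, fun hσα => ?_⟩
  rw [key, hσα]
  ring
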